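/- There exists a continuous injection I : 2^ω → B_1(2^ω, 2) (where B_1(2^ω,2) carries the pointwise convergence topology) such that the image A = I[2^ω] is not uniformly recoverable, and in fact the evaluation map φ : 2^ω × A → 2, φ(x,f) = f(x), is not Baire class one. -/

import Mathlib

open Filter Topology Set Classical

noncomputable section
open scoped Classical

/-- A set is Fσ if it is a countable union of closed sets. -/
def IsFsigma {X : Type*} [TopologicalSpace X] (s : Set X) : Prop :=
  ∃ F : ℕ → Set X, (∀ n, IsClosed (F n)) ∧ s = ⋃ n, F n

/-- A function is Baire class one if the preimage of every open set is Fσ. -/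
def BaireClassOneFn {X Y : Type*} [TopologicalSpace X] [TopologicalSpace Y] (f : X → Y) : Prop :=
  ∀ U : Set Y, IsOpen U → IsFsigma (f ⁻¹' U)

/-- A countable basis `(W m)` is good if for every open `U` and `x ∈ U` there is `m₀`
such that for all `m ≥ m₀`, `x ∈ W m` implies `W m ⊆ U`. -/
def IsGoodBasis {X : Type*} [TopologicalSpace X] (W : ℕ → Set X) : Prop :=
  TopologicalSpace.IsTopologicalBasis (Set.range W) ∧
  ∀ U : Set X, IsOpen U → ∀ x ∈ U, ∃ m₀, ∀ m ≥ m₀, x ∈ W m → W m ⊆ U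

/-- The path to `x` based on the dense sequence `D`, relative to the good basis `W`. -/
noncomputable def pathSeq {X : Type*} (W : ℕ → Set X) (D : ℕ → X) (x : X) : ℕ → X
  | 0 => D 0
  | n + 1 =>
    if x = pathSeq W D x n then pathSeq W D x n
    else D (sInf {p | ∃ m, x ∈ W m ∧ D p ∈ W m ∧ ∀ k, k ≤ n → pathSeq W D x k ∉ W m})
  termination_by n => n
  decreasing_by all_goals omega

/-- `f` is recoverable with respect to `D` (and the good basis `W`). -/
def RecoverableWith {X Y : Type*} [TopologicalSpace Y] (W : ℕ → Set X) (D : ℕ → X)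
    (f : X → Y) : Prop :=
  ∀ x : X, Tendsto (fun n => f (pathSeq W D x n)) atTop (𝓝 (f x))


/-!
The injection sends `α` to the indicator of its truncations `truncate α j` (the first `j` bits
of `α`, then `false`). Whether an eventually false `u` is a truncation of `α` depends on
finitely many bits of `α`, which gives continuity; the truncations of `α` form a countable set
whose only accumulation point is `α`, which gives Baire class one. On the diagonal,
`I β β = true` exactly when `β` is eventually false, and that set is countable and dense with
dense complement, hence not Gδ by Baire: so evaluation is not Baire class one.

Let `W` be a basis and `D` dense. If some eventually false `e` is missing from `D`, the path
to `e` is injective, while recoverability of `I e` at `e` would trap it in the finite set of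
truncations of `e`. Otherwise every eventually false point is in `D`. Each point of `D` lies
on the path of every point outside `D` close enough to it, and a diagonal construction
produces `x ∉ range D` whose path passes through infinitely many truncations of `x`; as `x` is
not eventually false, `I x x = false`, and `I x` is not recoverable at `x`.
-/

section Fsigma

variable {X Y : Type*} [TopologicalSpace X] [TopologicalSpace Y]

theorem isFsigma_iff_isGδ_compl {s : Set X} : IsFsigma s ↔ IsGδ sᶜ := by
  rw [isGδ_iff_eq_iInter_nat]
  constructor
  · rintro ⟨F, hF, rfl⟩
    exact ⟨fun n => (F n)ᶜ, fun n => (hF n).isOpen_compl, compl_iUnion F⟩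
  · rintro ⟨U, hU, hsU⟩
    refine ⟨fun n => (U n)ᶜ, fun n => (hU n).isClosed_compl, ?_⟩
    rw [← compl_iInter, ← hsU, compl_compl]

theorem IsFsigma.preimage {f : X → Y} (hf : Continuous f) {s : Set Y} (hs : IsFsigma s) :
    IsFsigma (f ⁻¹' s) := by
  rw [isFsigma_iff_isGδ_compl, ← preimage_compl]
  exact (isFsigma_iff_isGδ_compl.1 hs).preimage hf

theorem baireClassOneFn_of_isFsigma_preimage_singleton [Countable Y] {f : X → Y}
    (h : ∀ y, IsFsigma (f ⁻¹' {y})) : BaireClassOneFn f := by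
  intro U _
  rw [isFsigma_iff_isGδ_compl, ← biUnion_preimage_singleton, compl_iUnion₂]
  exact .biInter U.to_countable fun y _ => isFsigma_iff_isGδ_compl.1 (h y)

theorem isGδ_of_countable_closure_diff [PerfectlyNormalSpace X] [T1Space X] {s : Set X}
    (h : (closure s \ s).Countable) : IsGδ s := by
  have hs : s = closure s ∩ (closure s \ s)ᶜ := by
    ext x
    by_cases hx : x ∈ s
    · simp [hx, subset_closure hx]
    · simp [hx]
  rw [hs]
  exact isClosed_closure.isGδ.inter h.isGδ_compl

/-- Otherwise `s` and its complement would be dense Gδ sets with empty intersection. -/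
theorem not_isGδ_of_countable_of_dense [BaireSpace X] [T1Space X] [Nonempty X] {s : Set X}
    (hs : s.Countable) (hd : Dense s) (hdc : Dense sᶜ) : ¬ IsGδ s := fun hG => by
  simpa using (hd.inter_of_Gδ hG hs.isGδ_compl hdc).nonempty

end Fsigma

section PathSeq

variable {X : Type*} {W : ℕ → Set X} {D : ℕ → X} {x : X}

/-- The indices `p` admissible at step `n + 1` of the path to `x`; the path takes the least. -/
def pathCandidates (W : ℕ → Set X) (D : ℕ → X) (x : X) (n : ℕ) : Set ℕ :=
  {p | ∃ m, x ∈ W m ∧ D p ∈ W m ∧ ∀ k, k ≤ n → pathSeq W D x k ∉ W m}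

theorem pathSeq_mem_range (n : ℕ) : pathSeq W D x n ∈ range D := by
  induction n with
  | zero => exact ⟨0, by rw [pathSeq]⟩
  | succ n ih =>
    rw [pathSeq]
    split_ifs
    exacts [ih, ⟨_, rfl⟩]

theorem pathSeq_succ (hx : x ∉ range D) (n : ℕ) :
    pathSeq W D x (n + 1) = D (sInf (pathCandidates W D x n)) := by
  rw [pathSeq, if_neg (ne_of_mem_of_not_mem (pathSeq_mem_range n) hx).symm]
  rfl

variable [TopologicalSpace X] [T1Space X]
  (hW : TopologicalSpace.IsTopologicalBasis (range W)) (hD : DenseRange D)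
include hW hD

theorem sInf_pathCandidates_mem (hx : x ∉ range D) (n : ℕ) :
    sInf (pathCandidates W D x n) ∈ pathCandidates W D x n := by
  refine Nat.sInf_mem ?_
  have hF : IsClosed (pathSeq W D x '' Iic n) := ((finite_Iic n).image _).isClosed
  have hxF : x ∉ pathSeq W D x '' Iic n := fun ⟨k, _, hk⟩ => hx (hk ▸ pathSeq_mem_range k)
  obtain ⟨_, ⟨m, rfl⟩, hxm, hmF⟩ := hW.exists_subset_of_mem_open hxF hF.isOpen_compl
  obtain ⟨p, hp⟩ := hD.exists_mem_open (hW.isOpen ⟨m, rfl⟩) ⟨x, hxm⟩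
  exact ⟨p, m, hxm, hp, fun k hk hkm => hmF hkm ⟨k, hk, rfl⟩⟩

/-- Off `range D`, each new point of the path lies in a basic set avoiding all earlier ones. -/
theorem pathSeq_injective (hx : x ∉ range D) : Function.Injective (pathSeq W D x) := by
  refine Function.Injective.of_lt_imp_ne fun k n hkn heq => ?_
  obtain ⟨n, rfl⟩ := Nat.exists_eq_add_of_lt hkn
  obtain ⟨m, -, hm, hprev⟩ := sInf_pathCandidates_mem hW hD hx (k + n)
  exact hprev k (by omega) (by rwa [heq, pathSeq_succ hx])

theorem strictMono_sInf_pathCandidates (hx : x ∉ range D) :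
    StrictMono fun n => sInf (pathCandidates W D x n) := by
  refine strictMono_nat_of_lt_succ fun n => lt_of_le_of_ne ?_ fun heq => ?_
  · obtain ⟨m, hxm, hm, hprev⟩ := sInf_pathCandidates_mem hW hD hx (n + 1)
    exact Nat.sInf_le ⟨m, hxm, hm, fun k hk => hprev k (by omega)⟩
  · obtain ⟨m, -, hm, hprev⟩ := sInf_pathCandidates_mem hW hD hx (n + 1)
    exact hprev (n + 1) le_rfl (by rwa [pathSeq_succ hx, heq])

/-- The chosen indices increase, and until they reach `q` the path stays among
`D 0, …, D (q - 1)`, outside `W m`; so `q` is then the least admissible index. -/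
theorem exists_pathSeq_eq (hx : x ∉ range D) {m q : ℕ} (hxm : x ∈ W m) (hqm : D q ∈ W m)
    (hprev : ∀ p < q, D p ∉ W m) : ∃ n, pathSeq W D x n = D q := by
  rcases q.eq_zero_or_pos with rfl | hq
  · exact ⟨0, by rw [pathSeq]⟩
  have hσ := strictMono_sInf_pathCandidates hW hD hx
  have hex : ∃ n, q ≤ sInf (pathCandidates W D x n) := ⟨q, hσ.le_apply⟩
  have hbefore : ∀ k ≤ Nat.find hex, pathSeq W D x k ∉ W m := by
    rintro (_ | k) hk
    · rw [pathSeq]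
      exact hprev 0 hq
    · rw [pathSeq_succ hx]
      exact hprev _ (not_le.1 (Nat.find_min hex (by omega)))
  have hσq : sInf (pathCandidates W D x (Nat.find hex)) = q :=
    le_antisymm (Nat.sInf_le ⟨m, hxm, hqm, hbefore⟩) (Nat.find_spec hex)
  exact ⟨Nat.find hex + 1, by rw [pathSeq_succ hx, hσq]⟩

theorem eventually_mem_range_pathSeq {e : X} (he : e ∈ range D) :
    ∀ᶠ x in 𝓝 e, x ∉ range D → e ∈ range (pathSeq W D x) := by
  have hU : IsOpen (D '' Iio (Nat.find he))ᶜ := ((finite_Iio _).image D).isClosed.isOpen_compl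
  have heU : e ∈ (D '' Iio (Nat.find he))ᶜ := fun ⟨p, hp, hpe⟩ => Nat.find_min he hp hpe
  obtain ⟨_, ⟨m, rfl⟩, hem, hmU⟩ := hW.exists_subset_of_mem_open heU hU
  filter_upwards [(hW.isOpen ⟨m, rfl⟩).mem_nhds hem] with x hxm hx
  obtain ⟨n, hn⟩ := exists_pathSeq_eq hW hD hx hxm ((Nat.find_spec he).symm ▸ hem)
    fun p hp hpm => hmU hpm ⟨p, hp, rfl⟩
  exact ⟨n, hn.trans (Nat.find_spec he)⟩

end PathSeq

theorem RecoverableWith.eventually_eq {X Y : Type*} [TopologicalSpace Y] [DiscreteTopology Y]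
    {W : ℕ → Set X} {D : ℕ → X} {f : X → Y} (h : RecoverableWith W D f) (x : X) :
    ∀ᶠ n in atTop, f (pathSeq W D x n) = f x :=
  tendsto_pure.1 (nhds_discrete Y ▸ h x)

namespace PiNat

theorem isClosed_cylinder {E : ℕ → Type*} [∀ n, TopologicalSpace (E n)]
    [∀ n, DiscreteTopology (E n)] (x : ∀ n, E n) (n : ℕ) : IsClosed (cylinder x n) := by
  rw [cylinder_eq_pi]
  exact isClosed_set_pi fun _ _ => isClosed_discrete _

theorem exists_cylinder_subset {E : ℕ → Type*} [∀ n, TopologicalSpace (E n)]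
    [∀ n, DiscreteTopology (E n)] {x : ∀ n, E n} {s : Set (∀ n, E n)} (hs : s ∈ 𝓝 x) :
    ∃ n, cylinder x n ⊆ s := by
  obtain ⟨_, ⟨y, n, rfl⟩, hxy, hs⟩ := (isTopologicalBasis_cylinders E).mem_nhds_iff.1 hs
  exact ⟨n, mem_cylinder_iff_eq.1 hxy ▸ hs⟩

end PiNat

section Cantor

open PiNat

theorem tendsto_ite_lt {Y : Type*} [TopologicalSpace Y] (α β : ℕ → Y) :
    Tendsto (fun j i => if i < j then α i else β i) atTop (𝓝 α) :=
  tendsto_pi_nhds.2 fun i =>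
    tendsto_const_nhds.congr' ((eventually_gt_atTop i).mono fun _ hj => (if_pos hj).symm)

def truncate (α : ℕ → Bool) (j : ℕ) : ℕ → Bool := fun i => if i < j then α i else false

def eventuallyFalse : Set (ℕ → Bool) := {u | ∃ N, ∀ i ≥ N, u i = false}

def truncationIndicator (α : ℕ → Bool) : (ℕ → Bool) → Bool :=
  fun u => decide (u ∈ range (truncate α))

theorem tendsto_truncate (α : ℕ → Bool) : Tendsto (truncate α) atTop (𝓝 α) :=
  tendsto_ite_lt α fun _ => false

theorem truncate_eq_self {u : ℕ → Bool} {N : ℕ} (hu : ∀ i ≥ N, u i = false) :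
    truncate u N = u := by
  funext i
  by_cases hi : i < N
  · simp [truncate, hi]
  · simp [truncate, hi, hu i (not_lt.1 hi)]

theorem truncate_truncate (α : ℕ → Bool) (j N : ℕ) :
    truncate (truncate α j) N = truncate α (min j N) := by
  funext i
  simp only [truncate, lt_min_iff]
  split_ifs <;> tauto

theorem truncate_eq_of_mem_cylinder {α β : ℕ → Bool} {j : ℕ} (h : β ∈ cylinder α j) :
    truncate β j = truncate α j := by
  funext i
  simp only [truncate]
  split_ifs with hi
  exacts [h i hi, rfl]

theorem truncate_mem_eventuallyFalse (α : ℕ → Bool) (j : ℕ) :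
    truncate α j ∈ eventuallyFalse :=
  ⟨j, fun _ hi => if_neg (not_lt.2 hi)⟩

theorem mem_range_truncate_self_iff {u : ℕ → Bool} :
    u ∈ range (truncate u) ↔ u ∈ eventuallyFalse := by
  refine ⟨fun ⟨j, hj⟩ => hj ▸ truncate_mem_eventuallyFalse u j, fun ⟨N, hN⟩ => ?_⟩
  exact ⟨N, truncate_eq_self hN⟩

theorem countable_eventuallyFalse : eventuallyFalse.Countable := by
  refine (countable_range fun s : Finset ℕ => fun i => decide (i ∈ s)).mono ?_
  rintro u ⟨N, hN⟩
  refine ⟨(Finset.range N).filter (u · = true), funext fun i => ?_⟩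
  by_cases hi : i < N
  · simp [hi]
  · simp [hi, hN i (not_lt.1 hi)]

theorem dense_eventuallyFalse : Dense eventuallyFalse := fun α =>
  mem_closure_of_tendsto (tendsto_truncate α) (.of_forall (truncate_mem_eventuallyFalse α))

theorem dense_compl_eventuallyFalse : Dense eventuallyFalseᶜ := fun α =>
  mem_closure_of_tendsto (tendsto_ite_lt α fun _ => true) <| .of_forall fun j ⟨N, hN⟩ => by
    simpa using hN (max j N) (le_max_right _ _)

theorem finite_range_truncate {α : ℕ → Bool} (hα : α ∈ eventuallyFalse) :
    (range (truncate α)).Finite := by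
  obtain ⟨N, hN⟩ := hα
  refine ((finite_Iic N).image (truncate α)).subset ?_
  rintro _ ⟨j, rfl⟩
  rcases le_total j N with hj | hj
  · exact ⟨j, hj, rfl⟩
  · refine ⟨N, mem_Iic.2 le_rfl, ?_⟩
    rw [truncate_eq_self hN, truncate_eq_self fun i hi => hN i (hj.trans hi)]

theorem range_truncate_subset (α : ℕ → Bool) : range (truncate α) ⊆ eventuallyFalse :=
  range_subset_iff.2 (truncate_mem_eventuallyFalse α)

theorem mem_range_truncate_of_mem_cylinder {u α β : ℕ → Bool} {N : ℕ}
    (hu : ∀ i ≥ N, u i = false) (hβ : β ∈ cylinder α N) (h : u ∈ range (truncate β)) :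
    u ∈ range (truncate α) := by
  obtain ⟨j, rfl⟩ := h
  refine ⟨min j N, ?_⟩
  calc truncate α (min j N)
      = truncate β (min j N) :=
        (truncate_eq_of_mem_cylinder (cylinder_anti β (min_le_right j N)
          ((mem_cylinder_comm α β N).1 hβ)))
    _ = truncate (truncate β j) N := (truncate_truncate β j N).symm
    _ = truncate β j := truncate_eq_self hu

theorem continuous_truncationIndicator : Continuous truncationIndicator := by
  refine continuous_pi fun u => ((IsLocallyConstant.iff_eventually_eq _).2 fun α => ?_).continuous
  by_cases hu : u ∈ eventuallyFalse
  · obtain ⟨N, hN⟩ := hu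
    filter_upwards [(isOpen_cylinder _ α N).mem_nhds (self_mem_cylinder α N)] with β hβ
    simp only [truncationIndicator, decide_eq_decide]
    exact ⟨mem_range_truncate_of_mem_cylinder hN hβ,
      mem_range_truncate_of_mem_cylinder hN ((mem_cylinder_comm _ _ _).1 hβ)⟩
  · have hfalse (γ : ℕ → Bool) : truncationIndicator γ u = false :=
      decide_eq_false fun h => hu (range_truncate_subset γ h)
    exact .of_forall fun β => by rw [hfalse, hfalse]

theorem exists_mem_range_truncate_apply_iff {α : ℕ → Bool} {n : ℕ} :
    (∃ u ∈ range (truncate α), u n = true) ↔ α n = true := by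
  constructor
  · rintro ⟨_, ⟨j, rfl⟩, h⟩
    simp only [truncate] at h
    split_ifs at h
    exact h
  · exact fun h => ⟨_, ⟨n + 1, rfl⟩, by simp [truncate, h]⟩

theorem injective_truncationIndicator : Function.Injective truncationIndicator := by
  intro α β h
  have hr : range (truncate α) = range (truncate β) := by
    ext u
    simpa [truncationIndicator] using congrFun h u
  funext n
  rw [Bool.eq_iff_iff, ← exists_mem_range_truncate_apply_iff, hr,
    exists_mem_range_truncate_apply_iff]

/-- The truncations of `α` converge to `α`, their only possible accumulation point. -/
theorem isGδ_range_truncate (α : ℕ → Bool) : IsGδ (range (truncate α)) := by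
  refine isGδ_of_countable_closure_diff ((countable_singleton α).mono ?_)
  have hcl := (tendsto_truncate α).isCompact_insert_range.isClosed.closure_subset_iff.2
    (subset_insert _ _)
  exact fun u ⟨hu, hu'⟩ => (hcl hu).resolve_right hu'

theorem baireClassOneFn_truncationIndicator (α : ℕ → Bool) :
    BaireClassOneFn (truncationIndicator α) := by
  refine baireClassOneFn_of_isFsigma_preimage_singleton fun b => ?_
  rw [isFsigma_iff_isGδ_compl]
  cases b
  · convert isGδ_range_truncate α
    ext u
    simp [truncationIndicator]
  · convert (countable_range (truncate α)).isGδ_compl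
    ext u
    simp [truncationIndicator]

/-- Pulling back along `β ↦ (β, truncationIndicator β)`, the zero set of the evaluation map
would be the Fσ set of sequences that are not eventually `false`. -/
theorem not_baireClassOneFn_eval :
    ¬ BaireClassOneFn fun p : (ℕ → Bool) × range truncationIndicator =>
      (p.2 : (ℕ → Bool) → Bool) p.1 := by
  intro h
  have hdiag : Continuous fun β => (β, (⟨_, β, rfl⟩ : range truncationIndicator)) :=
    continuous_id.prodMk (continuous_truncationIndicator.subtype_mk _)
  have hF : IsFsigma eventuallyFalseᶜ := by
    convert (h {false} (isOpen_discrete _)).preimage hdiag using 1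
    ext β
    simp [truncationIndicator, ← mem_range_truncate_self_iff]
  rw [isFsigma_iff_isGδ_compl, compl_compl] at hF
  exact not_isGδ_of_countable_of_dense countable_eventuallyFalse dense_eventuallyFalse
    dense_compl_eventuallyFalse hF

end Cantor

section Diagonal

open PiNat

def extendAt (e : ℕ → Bool) (k : ℕ) (b : Bool) : ℕ → Bool :=
  fun i => if i < k then e i else if i = k then b else decide (i = k + 1)

section extendAt

variable (e : ℕ → Bool) (k : ℕ) (b : Bool)

theorem extendAt_mem_cylinder : extendAt e k b ∈ cylinder e k := fun _ hi => if_pos hi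

theorem extendAt_self : extendAt e k b k = b := by simp [extendAt]

theorem extendAt_succ : extendAt e k b (k + 1) = true := by simp [extendAt]

theorem extendAt_of_ge {i : ℕ} (hi : k + 2 ≤ i) : extendAt e k b i = false := by
  simp [extendAt, show ¬i < k by omega, show i ≠ k by omega, show i ≠ k + 1 by omega]

end extendAt

variable (depth : (ℕ → Bool) → ℕ)

/-- A stage is a pair `(e, n)` with `e` false from `n` on. -/
def diagonalStep (d : ℕ → Bool) (s : (ℕ → Bool) × ℕ) : (ℕ → Bool) × ℕ :=
  let k := max s.2 (depth s.1)
  (extendAt s.1 k (!d k), k + 2)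

def diagonalSeq (D : ℕ → ℕ → Bool) : ℕ → (ℕ → Bool) × ℕ
  | 0 => (fun _ => false, 0)
  | i + 1 => diagonalStep depth (D i) (diagonalSeq D i)

theorem diagonalSeq_fst_eq_false (D : ℕ → ℕ → Bool) :
    ∀ i, ∀ m ≥ (diagonalSeq depth D i).2, (diagonalSeq depth D i).1 m = false
  | 0, _, _ => rfl
  | _ + 1, _, hm => extendAt_of_ge _ _ _ hm

theorem cylinder_diagonalStep_subset (d : ℕ → Bool) (s : (ℕ → Bool) × ℕ) :
    cylinder (diagonalStep depth d s).1 (diagonalStep depth d s).2 ⊆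
      cylinder s.1 (max s.2 (depth s.1)) :=
  fun _ hy m hm => (hy m (Nat.lt_add_right 2 hm)).trans (extendAt_mem_cylinder _ _ _ m hm)

theorem exists_forall_mem_cylinder_diagonalSeq (D : ℕ → ℕ → Bool) :
    ∃ x, ∀ i, x ∈ cylinder (diagonalSeq depth D i).1 (diagonalSeq depth D i).2 := by
  obtain ⟨x, hx⟩ := IsCompact.nonempty_iInter_of_sequence_nonempty_isCompact_isClosed
    (fun i => cylinder (diagonalSeq depth D i).1 (diagonalSeq depth D i).2)
    (fun i => (cylinder_diagonalStep_subset depth (D i) _).trans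
      (cylinder_anti _ (le_max_left _ _)))
    (fun i => ⟨_, self_mem_cylinder _ _⟩) (isClosed_cylinder _ _).isCompact
    fun _ => isClosed_cylinder _ _
  exact ⟨x, mem_iInter.1 hx⟩

theorem exists_not_mem_range_infinite_truncations (D : ℕ → ℕ → Bool) :
    ∃ x ∉ range D, {t ∈ range (truncate x) | x ∈ cylinder t (depth t)}.Infinite := by
  obtain ⟨x, hx⟩ := exists_forall_mem_cylinder_diagonalSeq depth D
  set e := fun i => (diagonalSeq depth D i).1
  set n := fun i => (diagonalSeq depth D i).2
  set k := fun i => max (n i) (depth (e i))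
  have he (i : ℕ) : e (i + 1) = extendAt (e i) (k i) (!D i (k i)) := rfl
  have hn (i : ℕ) : n (i + 1) = k i + 2 := rfl
  have hnk (i : ℕ) : n i ≤ k i := le_max_left _ _
  have hdk (i : ℕ) : depth (e i) ≤ k i := le_max_right _ _
  have hx (i : ℕ) : x ∈ cylinder (e i) (n i) := hx i
  have hstep (i : ℕ) : cylinder (e (i + 1)) (n (i + 1)) ⊆ cylinder (e i) (k i) :=
    cylinder_diagonalStep_subset depth (D i) _
  have hfalse (i : ℕ) : ∀ m ≥ n i, e i m = false := diagonalSeq_fst_eq_false depth D i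
  clear_value e n k
  have hx_apply (i m : ℕ) (hm : m < k i + 2) : x m = e (i + 1) m := hx (i + 1) m (hn i ▸ hm)
  have htrunc (i : ℕ) : truncate x (n i) = e i := by
    funext m
    simp only [truncate]
    split_ifs with hm
    exacts [hx i m hm, (hfalse i m (not_lt.1 hm)).symm]
  refine ⟨x, fun ⟨i, hi⟩ => ?_, ?_⟩
  · have := hx_apply i (k i) (by omega)
    rw [he, extendAt_self, ← hi] at this
    exact Bool.not_ne_self _ this.symm
  have hmono : StrictMono n := strictMono_nat_of_lt_succ fun i => by
    rw [hn]
    have := hnk i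
    omega
  have hinj : Function.Injective fun i => truncate x (n i) := by
    refine Function.Injective.of_lt_imp_ne fun i j hij heq => ?_
    have hj : k i + 2 ≤ n j := hn i ▸ hmono.monotone hij
    have h1 : truncate x (n j) (k i + 1) = true := by
      rw [truncate, if_pos (by omega), hx_apply i _ (by omega), he, extendAt_succ]
    have h2 : truncate x (n i) (k i + 1) = false := if_neg (by have := hnk i; omega)
    rw [heq, h1] at h2
    exact Bool.noConfusion h2
  refine (infinite_range_of_injective hinj).mono ?_
  rintro _ ⟨i, rfl⟩
  refine ⟨⟨n i, rfl⟩, ?_⟩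
  simp only [htrunc]
  exact cylinder_anti _ (hdk i) (hstep i (hx (i + 1)))

end Diagonal

section Recoverable

open PiNat

variable {W : ℕ → Set (ℕ → Bool)} {D : ℕ → ℕ → Bool}
  (hW : TopologicalSpace.IsTopologicalBasis (range W)) (hD : DenseRange D)
include hW hD

/-- The path to `e` avoids `e`, so it cannot stay inside the finite set of truncations of `e`. -/
theorem not_recoverableWith_of_mem_eventuallyFalse {e : ℕ → Bool} (he : e ∈ eventuallyFalse)
    (heD : e ∉ range D) : ¬ RecoverableWith W D (truncationIndicator e) := fun hrec => by
  have hin : ∀ᶠ n in atTop, pathSeq W D e n ∈ range (truncate e) := by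
    simpa [truncationIndicator, mem_range_truncate_self_iff.2 he] using hrec.eventually_eq e
  have hout : ∀ᶠ n in atTop, pathSeq W D e n ∉ range (truncate e) :=
    Nat.cofinite_eq_atTop ▸ (pathSeq_injective hW hD heD).tendsto_cofinite.eventually
      (finite_range_truncate he).eventually_cofinite_notMem
  obtain ⟨n, hn, hn'⟩ := (hin.and hout).exists
  exact hn' hn

/-- If `D` exhausts the eventually false sequences, the diagonal point `x` is not eventually
false, yet its path passes through infinitely many of its truncations. -/
theorem exists_not_recoverableWith_of_subset_range (hE : eventuallyFalse ⊆ range D) :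
    ∃ x, ¬ RecoverableWith W D (truncationIndicator x) := by
  have hdepth (e : ℕ → Bool) : ∃ k, e ∈ range D →
      ∀ x ∈ cylinder e k, x ∉ range D → e ∈ range (pathSeq W D x) := by
    by_cases he : e ∈ range D
    · obtain ⟨k, hk⟩ := exists_cylinder_subset (eventually_mem_range_pathSeq hW hD he)
      exact ⟨k, fun _ => hk⟩
    · exact ⟨0, fun h => absurd h he⟩
  choose depth hdepth using hdepth
  obtain ⟨x, hxD, hinf⟩ := exists_not_mem_range_infinite_truncations depth D
  refine ⟨x, fun hrec => hinf ?_⟩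
  have hxx : x ∉ range (truncate x) := fun h => hxD (hE (mem_range_truncate_self_iff.1 h))
  have hout : ∀ᶠ n in atTop, pathSeq W D x n ∉ range (truncate x) := by
    simpa only [truncationIndicator, hxx, decide_false, decide_eq_false_iff_not] using
      hrec.eventually_eq x
  obtain ⟨N, hN⟩ := hout.exists_forall_of_atTop
  refine ((finite_Iio N).image (pathSeq W D x)).subset ?_
  rintro t ⟨ht, hxt⟩
  obtain ⟨n, rfl⟩ := hdepth t (hE (range_truncate_subset x ht)) x hxt hxD
  exact ⟨n, not_le.1 fun hn => hN n hn ht, rfl⟩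

theorem exists_not_recoverableWith : ∃ α, ¬ RecoverableWith W D (truncationIndicator α) := by
  by_cases hE : eventuallyFalse ⊆ range D
  · exact exists_not_recoverableWith_of_subset_range hW hD hE
  · obtain ⟨e, he, heD⟩ := not_subset.1 hE
    exact ⟨e, not_recoverableWith_of_mem_eventuallyFalse hW hD he heD⟩

end Recoverable

/-- There is a continuous injection `I : 2^ω → B₁(2^ω, 2)` (pointwise convergence topology
on the target) whose range is not uniformly recoverable; in fact the evaluation map on
`2^ω × I[2^ω]` is not Baire class one. -/
theorem exists_continuous_injection_not_uniformlyRecoverable :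
    ∃ I : (ℕ → Bool) → ((ℕ → Bool) → Bool),
      Continuous I ∧ Function.Injective I ∧
      (∀ α : ℕ → Bool, BaireClassOneFn (I α)) ∧
      ¬ (∃ W : ℕ → Set (ℕ → Bool), IsGoodBasis W ∧
          ∃ D : ℕ → (ℕ → Bool), DenseRange D ∧ ∀ f ∈ Set.range I, RecoverableWith W D f) ∧
      ¬ BaireClassOneFn
          (fun p : (ℕ → Bool) × ↥(Set.range I) => (p.2 : (ℕ → Bool) → Bool) p.1) := by
  refine ⟨truncationIndicator, continuous_truncationIndicator, injective_truncationIndicator,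
    baireClassOneFn_truncationIndicator, ?_, not_baireClassOneFn_eval⟩
  rintro ⟨W, hW, D, hD, hrec⟩
  obtain ⟨α, hα⟩ := exists_not_recoverableWith hW.1 hD
  exact hα (hrec _ ⟨α, rfl⟩)
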